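/- arXiv:1605.09655 — 4 statements merged into one kernel-verified Lean document; each statement's English description precedes it below -/
import Mathlib

section
/- Let φ be a norm on ℝ^n differentiable away from 0 and φ° its polar norm. Then for every ξ ≠ 0, φ°(∇φ(ξ)) = 1. -/
open scoped RealInnerProductSpace

theorem stmt4 (n : ℕ) (φ : EuclideanSpace ℝ (Fin n) → ℝ)
    (hφ0 : ∀ x, 0 ≤ φ x) (hφeq : ∀ x, φ x = 0 ↔ x = 0)
    (hhom : ∀ (c : ℝ) (x), φ (c • x) = |c| * φ x)
    (htri : ∀ x y, φ (x + y) ≤ φ x + φ y)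
    (hdiff : ∀ x : EuclideanSpace ℝ (Fin n), x ≠ 0 → DifferentiableAt ℝ φ x)
    (φpol : EuclideanSpace ℝ (Fin n) → ℝ)
    (hpol : ∀ ξ, φpol ξ = sSup {t : ℝ | ∃ x, φ x ≤ 1 ∧ t = ⟪x, ξ⟫})
    (ξ : EuclideanSpace ℝ (Fin n)) (hξ : ξ ≠ 0) :
    φpol (gradient φ ξ) = 1 := by
  set D := fderiv ℝ φ ξ with hDdef
  have hD : HasFDerivAt φ D ξ := (hdiff ξ hξ).hasFDerivAt
  have hg : ∀ x, ⟪gradient φ ξ, x⟫ = D x := by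
    intro x
    rw [gradient, InnerProductSpace.toDual_symm_apply]
  have hφpos : 0 < φ ξ := lt_of_le_of_ne (hφ0 ξ) (fun h => hξ ((hφeq ξ).mp h.symm))
  -- key bound : D x ≤ φ x for all x
  have hkey : ∀ x, D x ≤ φ x := by
    intro x
    have h1 : HasDerivAt (fun t : ℝ => ξ + t • x) x 0 := by
      simpa using ((hasDerivAt_id (0 : ℝ)).smul_const x).const_add ξ
    have hD' : HasFDerivAt φ D (ξ + (0:ℝ) • x) := by simpa using hD
    have hline : HasDerivAt (fun t : ℝ => φ (ξ + t • x)) (D x) 0 :=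
      hD'.comp_hasDerivAt 0 h1
    rw [hasDerivAt_iff_tendsto_slope] at hline
    have hline' : Filter.Tendsto (slope (fun t : ℝ => φ (ξ + t • x)) 0)
        (nhdsWithin 0 (Set.Ioi 0)) (nhds (D x)) :=
      hline.mono_left (nhdsWithin_mono _ fun t ht => ne_of_gt ht)
    refine le_of_tendsto hline' ?_
    filter_upwards [self_mem_nhdsWithin] with t ht
    have ht0 : (0 : ℝ) < t := ht
    have : φ (ξ + t • x) ≤ φ ξ + t * φ x := by
      calc φ (ξ + t • x) ≤ φ ξ + φ (t • x) := htri _ _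
        _ = φ ξ + t * φ x := by rw [hhom, abs_of_pos ht0]
    rw [slope_def_field]
    simp only [sub_zero, zero_smul, add_zero]
    rw [div_le_iff₀ ht0]
    linarith [mul_comm t (φ x)]
  -- Euler identity : D ξ = φ ξ
  have hEuler : D ξ = φ ξ := by
    have h1 : HasDerivAt (fun t : ℝ => t • ξ) ξ 1 := by
      simpa using (hasDerivAt_id (1 : ℝ)).smul_const ξ
    have hD'' : HasFDerivAt φ D ((1:ℝ) • ξ) := by simpa using hD
    have h2 : HasDerivAt (fun t : ℝ => φ (t • ξ)) (D ξ) 1 :=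
      hD''.comp_hasDerivAt 1 h1
    have h3 : HasDerivAt (fun t : ℝ => t * φ ξ) (φ ξ) 1 := by
      simpa using (hasDerivAt_id (1 : ℝ)).mul_const (φ ξ)
    have heq : (fun t : ℝ => t * φ ξ) =ᶠ[nhds 1] (fun t : ℝ => φ (t • ξ)) := by
      filter_upwards [eventually_gt_nhds (by norm_num : (0:ℝ) < 1)] with t ht
      rw [hhom, abs_of_pos ht]
    exact ((h3.congr_of_eventuallyEq heq.symm).unique h2).symm
  rw [hpol]
  apply IsGreatest.csSup_eq
  constructor
  · refine ⟨(φ ξ)⁻¹ • ξ, ?_, ?_⟩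
    · rw [hhom, abs_of_pos (inv_pos.mpr hφpos), inv_mul_cancel₀ (ne_of_gt hφpos)]
    · rw [real_inner_comm, real_inner_smul_right, hg, hEuler]
      exact (inv_mul_cancel₀ (ne_of_gt hφpos)).symm
  · rintro t ⟨x, hx1, rfl⟩
    calc ⟪x, gradient φ ξ⟫ = D x := by rw [real_inner_comm, hg]
      _ ≤ φ x := hkey x
      _ ≤ 1 := hx1
end

section
/- Let φ be a norm on ℝ^n, differentiable away from 0 with differentiable polar φ°. Then for every ξ ≠ 0, one has (φ° ∇φ°)(φ(ξ) ∇φ(ξ)) = ξ; in particular ∇φ°(∇φ(ξ)) = ξ / φ(ξ). -/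
open scoped RealInnerProductSpace

/-! A seminorm is convex and positively homogeneous, so its gradient at `ξ` is a subgradient:
`⟪∇φ ξ, x⟫ ≤ φ x`, with equality at `x = ξ` (Euler). Hence for `c ≥ 0` the supremum defining
`φ° (c • ∇φ ξ)` equals `c` and is attained at `u = (φ ξ)⁻¹ • ξ`. As `⟪u, η⟫ ≤ φ° η` for every `η`,
the function `φ° - ⟪u, ·⟫` attains its minimum at `c • ∇φ ξ`, so `∇φ° (c • ∇φ ξ) = u`. -/

section NormedSpace

variable {E : Type*} [NormedAddCommGroup E] [NormedSpace ℝ E]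

theorem ConvexOn.add_fderiv_le {f : E → ℝ} (hf : ConvexOn ℝ Set.univ f) {a : E}
    (hd : DifferentiableAt ℝ f a) (y : E) : f a + fderiv ℝ f a y ≤ f (a + y) := by
  let g : ℝ → ℝ := fun t => f (a + t • y)
  have hg : ConvexOn ℝ Set.univ g :=
    (hf.translate_right a).comp_linearMap (LinearMap.toSpanSingleton ℝ E y)
  have hline : HasDerivAt (fun t : ℝ => a + t • y) y 0 := by
    simpa using ((hasDerivAt_id (0 : ℝ)).smul_const y).const_add a
  have hderiv : HasDerivAt g (fderiv ℝ f a y) 0 := by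
    have hd' : HasFDerivAt f (fderiv ℝ f a) (a + (0 : ℝ) • y) := by simpa using hd.hasFDerivAt
    simpa [g, Function.comp_def] using hd'.comp_hasDerivAt 0 hline
  have := hg.le_slope_of_hasDerivAt (Set.mem_univ 0) (Set.mem_univ 1) zero_lt_one hderiv
  simp only [slope_def_field, one_smul, zero_smul, add_zero, sub_zero, div_one, g] at this
  linarith

theorem Seminorm.exists_pos_mul_norm_le [FiniteDimensional ℝ E] (p : Seminorm ℝ E)
    (hp : ∀ x, p x = 0 → x = 0) : ∃ m > 0, ∀ x, m * ‖x‖ ≤ p x := by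
  rcases subsingleton_or_nontrivial E with hE | hE
  · exact ⟨1, one_pos, fun x => by simp [Subsingleton.elim x 0]⟩
  obtain ⟨x₀, hx₀, hmin⟩ := (isCompact_sphere (0 : E) 1).exists_isMinOn
    (NormedSpace.sphere_nonempty.mpr zero_le_one) p.convexOn.locallyLipschitz.continuous.continuousOn
  have hx₀ne : x₀ ≠ 0 := ne_zero_of_mem_unit_sphere ⟨x₀, hx₀⟩
  refine ⟨p x₀, (apply_nonneg p x₀).lt_of_ne' fun h => hx₀ne (hp x₀ h), fun x => ?_⟩
  rcases eq_or_ne x 0 with rfl | hx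
  · simp
  have hx' : 0 < ‖x‖ := norm_pos_iff.mpr hx
  have := hmin (show ‖x‖⁻¹ • x ∈ Metric.sphere 0 1 by
    rw [mem_sphere_zero_iff_norm, norm_smul, norm_inv, norm_norm, inv_mul_cancel₀ hx'.ne'])
  rw [Set.mem_ofPred_eq, map_smul_eq_mul, norm_inv, norm_norm, le_inv_mul_iff₀ hx'] at this
  rwa [mul_comm]

theorem Seminorm.map_inv_smul_self (p : Seminorm ℝ E) {x : E} (hx : p x ≠ 0) :
    p ((p x)⁻¹ • x) = 1 := by
  rw [map_smul_eq_mul, norm_inv, Real.norm_of_nonneg (apply_nonneg p x), inv_mul_cancel₀ hx]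

end NormedSpace

section InnerProductSpace

variable {E : Type*} [NormedAddCommGroup E] [InnerProductSpace ℝ E]

theorem gradient_eq_of_inner_le [CompleteSpace E] {f : E → ℝ} {u η : E}
    (hd : DifferentiableAt ℝ f η) (hle : ∀ y, ⟪u, y⟫ ≤ f y) (heq : f η = ⟪u, η⟫) :
    gradient f η = u := by
  have hmin : IsLocalMin (fun y => f y - innerSL ℝ u y) η :=
    Filter.Eventually.of_forall fun y => by simpa [heq] using hle y
  have hfd : fderiv ℝ f η = innerSL ℝ u := by
    have h0 := hmin.fderiv_eq_zero
    rwa [fderiv_fun_sub hd (innerSL ℝ u).differentiableAt, (innerSL ℝ u).fderiv,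
      sub_eq_zero] at h0
  rw [gradient, hfd]
  exact (InnerProductSpace.toDual ℝ E).symm_apply_eq.mpr (by ext; simp)

namespace Seminorm

variable [CompleteSpace E] (p : Seminorm ℝ E)

theorem inner_gradient_le (ξ x : E) : ⟪gradient p ξ, x⟫ ≤ p x := by
  by_cases hd : DifferentiableAt ℝ p ξ
  · have := p.convexOn.add_fderiv_le hd x
    rw [inner_gradient_left]
    linarith [map_add_le_add p ξ x]
  · simp [gradient_eq_zero_of_not_differentiableAt hd]

theorem inner_gradient_self {ξ : E} (hd : DifferentiableAt ℝ p ξ) : ⟪gradient p ξ, ξ⟫ = p ξ := by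
  refine le_antisymm (p.inner_gradient_le ξ ξ) ?_
  have := p.convexOn.add_fderiv_le hd (-ξ)
  rw [add_neg_cancel, map_zero, map_neg] at this
  rw [inner_gradient_left]
  linarith

theorem inner_inv_smul_self_smul_gradient {ξ : E} (hd : DifferentiableAt ℝ p ξ) (hpξ : p ξ ≠ 0)
    (c : ℝ) : ⟪(p ξ)⁻¹ • ξ, c • gradient p ξ⟫ = c := by
  rw [real_inner_smul_left, real_inner_smul_right, real_inner_comm, p.inner_gradient_self hd]
  field_simp

end Seminorm

noncomputable def polarNorm (p : E → ℝ) (ξ : E) : ℝ := sSup {t : ℝ | ∃ x, p x ≤ 1 ∧ t = ⟪x, ξ⟫}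

section Polar

variable (p : Seminorm ℝ E)

theorem polarNorm_le {ξ : E} {b : ℝ} (h : ∀ x, p x ≤ 1 → ⟪x, ξ⟫ ≤ b) : polarNorm p ξ ≤ b :=
  csSup_le ⟨0, 0, by simp⟩ fun _ ⟨x, hx, ht⟩ => ht ▸ h x hx

variable [FiniteDimensional ℝ E] {p}

theorem inner_le_polarNorm (hp : ∀ x, p x = 0 → x = 0) {x : E} (hx : p x ≤ 1) (ξ : E) :
    ⟪x, ξ⟫ ≤ polarNorm p ξ := by
  obtain ⟨m, hm, hmp⟩ := p.exists_pos_mul_norm_le hp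
  refine le_csSup ⟨‖ξ‖ / m, fun _ ⟨y, hy, ht⟩ => ht ▸ ?_⟩ ⟨x, hx, rfl⟩
  rw [le_div_iff₀ hm]
  nlinarith [real_inner_le_norm y ξ, hmp y, norm_nonneg ξ]

theorem polarNorm_smul_gradient (hp : ∀ x, p x = 0 → x = 0) {ξ : E}
    (hd : DifferentiableAt ℝ p ξ) (hpξ : p ξ ≠ 0) {c : ℝ} (hc : 0 ≤ c) :
    polarNorm p (c • gradient p ξ) = c := by
  refine le_antisymm (polarNorm_le p fun x hx => ?_) ?_
  · rw [real_inner_smul_right, real_inner_comm]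
    exact mul_le_of_le_one_right hc ((p.inner_gradient_le ξ x).trans hx)
  · simpa only [p.inner_inv_smul_self_smul_gradient hd hpξ] using
      inner_le_polarNorm hp (p.map_inv_smul_self hpξ).le (c • gradient p ξ)

theorem gradient_polarNorm_smul_gradient (hp : ∀ x, p x = 0 → x = 0) {ξ : E}
    (hd : DifferentiableAt ℝ p ξ) (hpξ : p ξ ≠ 0) {c : ℝ} (hc : 0 ≤ c)
    (hd' : DifferentiableAt ℝ (polarNorm p) (c • gradient p ξ)) :
    gradient (polarNorm p) (c • gradient p ξ) = (p ξ)⁻¹ • ξ :=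
  gradient_eq_of_inner_le hd' (inner_le_polarNorm hp (p.map_inv_smul_self hpξ).le) <| by
    rw [polarNorm_smul_gradient hp hd hpξ hc, p.inner_inv_smul_self_smul_gradient hd hpξ]

end Polar

end InnerProductSpace

theorem stmt5_general (n : ℕ) (φ : EuclideanSpace ℝ (Fin n) → ℝ)
    (hφeq : ∀ x, φ x = 0 ↔ x = 0)
    (hhom : ∀ (c : ℝ) (x), φ (c • x) = |c| * φ x)
    (htri : ∀ x y, φ (x + y) ≤ φ x + φ y)
    (hdiff : ∀ x : EuclideanSpace ℝ (Fin n), x ≠ 0 → DifferentiableAt ℝ φ x)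
    (φpol : EuclideanSpace ℝ (Fin n) → ℝ)
    (hpol : ∀ ξ, φpol ξ = sSup {t : ℝ | ∃ x, φ x ≤ 1 ∧ t = ⟪x, ξ⟫})
    (hpoldiff : ∀ x : EuclideanSpace ℝ (Fin n), x ≠ 0 → DifferentiableAt ℝ φpol x)
    (ξ : EuclideanSpace ℝ (Fin n)) (hξ : ξ ≠ 0) :
    φpol (φ ξ • gradient φ ξ) • gradient φpol (φ ξ • gradient φ ξ) = ξ ∧
    gradient φpol (gradient φ ξ) = (φ ξ)⁻¹ • ξ := by
  obtain ⟨p, rfl⟩ : ∃ p : Seminorm ℝ (EuclideanSpace ℝ (Fin n)), ⇑p = φ :=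
    ⟨Seminorm.of φ htri hhom, rfl⟩
  obtain rfl : φpol = polarNorm p := funext hpol
  have hp : ∀ x, p x = 0 → x = 0 := fun x => (hφeq x).1
  have hd := hdiff ξ hξ
  have hpξ : 0 < p ξ := (apply_nonneg p ξ).lt_of_ne' fun h => hξ (hp ξ h)
  have hD : gradient p ξ ≠ 0 := fun h => by simpa [h, hpξ.ne] using p.inner_gradient_self hd
  have hgrad (c : ℝ) (hc : 0 < c) : gradient (polarNorm p) (c • gradient p ξ) = (p ξ)⁻¹ • ξ :=
    gradient_polarNorm_smul_gradient hp hd hpξ.ne' hc.le (hpoldiff _ (smul_ne_zero hc.ne' hD))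
  constructor
  · rw [polarNorm_smul_gradient hp hd hpξ.ne' hpξ.le, hgrad _ hpξ, smul_inv_smul₀ hpξ.ne']
  · simpa using hgrad 1 one_pos

theorem stmt5 (n : ℕ) (φ : EuclideanSpace ℝ (Fin n) → ℝ)
    (hφ0 : ∀ x, 0 ≤ φ x) (hφeq : ∀ x, φ x = 0 ↔ x = 0)
    (hhom : ∀ (c : ℝ) (x), φ (c • x) = |c| * φ x)
    (htri : ∀ x y, φ (x + y) ≤ φ x + φ y)
    (hstrict : ∀ x y, φ x ≤ 1 → φ y ≤ 1 → x ≠ y → φ ((1 / 2 : ℝ) • (x + y)) < 1)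
    (hdiff : ∀ x : EuclideanSpace ℝ (Fin n), x ≠ 0 → DifferentiableAt ℝ φ x)
    (φpol : EuclideanSpace ℝ (Fin n) → ℝ)
    (hpol : ∀ ξ, φpol ξ = sSup {t : ℝ | ∃ x, φ x ≤ 1 ∧ t = ⟪x, ξ⟫})
    (hpoldiff : ∀ x : EuclideanSpace ℝ (Fin n), x ≠ 0 → DifferentiableAt ℝ φpol x)
    (ξ : EuclideanSpace ℝ (Fin n)) (hξ : ξ ≠ 0) :
    φpol (φ ξ • gradient φ ξ) • gradient φpol (φ ξ • gradient φ ξ) = ξ ∧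
    gradient φpol (gradient φ ξ) = (φ ξ)⁻¹ • ξ :=
  stmt5_general n φ hφeq hhom htri hdiff φpol hpol hpoldiff ξ hξ
end

section
/- Let μ be a nonnegative measure on ℝ^n, x a point, and for r > 0 with μ(B_r(x)) > 0 define ν_r := (∫_{B_r(x)} f dμ)/(μ(B_r(x))) for a vector-valued density f with |f| ≤ 1 μ-a.e. Then for 0 < s < r, |ν_r - ν_s| ≤ 2·[(μ(B_r(x)) - |∫_{B_r(x)} f dμ|)/μ(B_s(x))]^{1/2}. -/
open MeasureTheory Metric
open scoped ENNReal RealInnerProductSpace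

/-!
Write `u` and `w` for the averages of `f` over the large and the small ball, and `D` for the
defect `μ(B_r) - |∫_{B_r} f|`. Since `|u| ≤ 1`, the set function `A ↦ μ(A) - ⟪u, ∫_A f⟫` is
monotone, so `μ(B_s)(1 - ⟪u, w⟫) ≤ μ(B_r)(1 - |u|²) ≤ 2 D`. As `u` and `w` lie in the unit
ball, `|u - w|² ≤ 2 - 2⟪u, w⟫ ≤ 4 D / μ(B_s)`.
-/

section

variable {E : Type*} [NormedAddCommGroup E] [InnerProductSpace ℝ E]

lemma norm_sub_sq_le_two_sub_two_inner {u w : E} (hu : ‖u‖ ≤ 1) (hw : ‖w‖ ≤ 1) :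
    ‖u - w‖ ^ 2 ≤ 2 - 2 * ⟪u, w⟫ := by
  rw [norm_sub_sq_real]
  nlinarith [norm_nonneg u, norm_nonneg w]

variable {α : Type*} [MeasurableSpace α] {μ : Measure α} {f : α → E} {s t : Set α}

lemma norm_setAverage_le_one (hf : ∀ᵐ y ∂μ, ‖f y‖ ≤ 1) : ‖⨍ y in s, f y ∂μ‖ ≤ 1 := by
  rw [setAverage_eq, norm_smul, norm_inv, Real.norm_of_nonneg measureReal_nonneg]
  rcases eq_or_ne (μ s) ∞ with hs | hs
  · simp [Measure.real, hs]
  · refine inv_mul_le_one_of_le₀ ?_ measureReal_nonneg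
    simpa using norm_setIntegral_le_of_norm_le_const_ae' hs.lt_top (hf.mono fun y hy _ => hy)

variable [CompleteSpace E]

lemma measureReal_sub_inner_setIntegral_mono (hf : ∀ᵐ y ∂μ, ‖f y‖ ≤ 1) {v : E} (hv : ‖v‖ ≤ 1)
    (hst : s ⊆ t) (ht : μ t ≠ ∞) (hint : IntegrableOn f t μ) :
    μ.real s - ⟪v, ∫ y in s, f y ∂μ⟫ ≤ μ.real t - ⟪v, ∫ y in t, f y ∂μ⟫ := by
  have integral_eq : ∀ u ⊆ t,
      ∫ y in u, (1 - ⟪v, f y⟫) ∂μ = μ.real u - ⟪v, ∫ y in u, f y ∂μ⟫ := by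
    intro u hu
    have hfu := hint.mono_set hu
    rw [integral_sub (integrableOn_const (C := (1 : ℝ)) (measure_ne_top_of_subset hu ht))
      (hfu.const_inner v), integral_inner hfu]
    simp
  rw [← integral_eq s hst, ← integral_eq t subset_rfl]
  refine setIntegral_mono_set ((integrableOn_const ht).sub (hint.const_inner v)) ?_
    hst.eventuallyLE
  filter_upwards [ae_restrict_of_ae hf] with y hy
  have := (real_inner_le_norm v (f y)).trans (mul_le_one₀ hv (norm_nonneg _) hy)
  simpa [sub_nonneg] using this

theorem norm_setAverage_sub_setAverage_le (hf : ∀ᵐ y ∂μ, ‖f y‖ ≤ 1) (hst : s ⊆ t)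
    (ht : μ t ≠ ∞) (hs : μ s ≠ 0) (hint : IntegrableOn f t μ) :
    ‖(⨍ y in t, f y ∂μ) - ⨍ y in s, f y ∂μ‖ ≤
      2 * √((μ.real t - ‖∫ y in t, f y ∂μ‖) / μ.real s) := by
  set u := ⨍ y in t, f y ∂μ
  set w := ⨍ y in s, f y ∂μ
  have hs_ne_top : μ s ≠ ∞ := measure_ne_top_of_subset hst ht
  have hMs : 0 < μ.real s := ENNReal.toReal_pos hs hs_ne_top
  have hMt : 0 < μ.real t := hMs.trans_le (measureReal_mono hst ht)
  have hIs : ∫ y in s, f y ∂μ = μ.real s • w := (measure_smul_setAverage f hs_ne_top).symm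
  have hIt : ∫ y in t, f y ∂μ = μ.real t • u := (measure_smul_setAverage f ht).symm
  have hu := norm_setAverage_le_one (s := t) hf
  have hmono := measureReal_sub_inner_setIntegral_mono hf hu hst ht hint
  rw [hIs, hIt, real_inner_smul_right, real_inner_smul_right, real_inner_self_eq_norm_sq]
    at hmono
  have hinner : 1 - ⟪u, w⟫ ≤ 2 * ((μ.real t - ‖∫ y in t, f y ∂μ‖) / μ.real s) := by
    rw [hIt, norm_smul, Real.norm_of_nonneg hMt.le, ← mul_div_assoc, le_div_iff₀ hMs]
    nlinarith [mul_nonneg hMt.le (sq_nonneg (1 - ‖u‖))]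
  have hsq := norm_sub_sq_le_two_sub_two_inner hu (norm_setAverage_le_one (s := s) hf)
  rw [← Real.sqrt_sq (norm_nonneg (u - w)), ← Real.sqrt_sq zero_le_two,
    ← Real.sqrt_mul (sq_nonneg _)]
  exact Real.sqrt_le_sqrt (by linarith)

end

theorem stmt14_general (n : ℕ) (μ : Measure (EuclideanSpace ℝ (Fin n)))
    (f : EuclideanSpace ℝ (Fin n) → EuclideanSpace ℝ (Fin n))
    (x : EuclideanSpace ℝ (Fin n)) (s r : ℝ) (hsr : s < r)
    (hf : ∀ᵐ y ∂μ, ‖f y‖ ≤ 1)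
    (hint : IntegrableOn f (ball x r) μ)
    (hμr : μ (ball x r) < ⊤)
    (hμs : 0 < μ (ball x s)) :
    ‖(μ (ball x r)).toReal⁻¹ • (∫ y in ball x r, f y ∂μ) -
        (μ (ball x s)).toReal⁻¹ • (∫ y in ball x s, f y ∂μ)‖ ≤
      2 * Real.sqrt
        (((μ (ball x r)).toReal - ‖∫ y in ball x r, f y ∂μ‖) /
          (μ (ball x s)).toReal) := by
  simpa only [setAverage_eq, Measure.real] using
    norm_setAverage_sub_setAverage_le hf (ball_subset_ball hsr.le) hμr.ne hμs.ne' hint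

theorem stmt14 (n : ℕ) (μ : Measure (EuclideanSpace ℝ (Fin n)))
    (f : EuclideanSpace ℝ (Fin n) → EuclideanSpace ℝ (Fin n))
    (x : EuclideanSpace ℝ (Fin n)) (s r : ℝ) (hs : 0 < s) (hsr : s < r)
    (hf : ∀ᵐ y ∂μ, ‖f y‖ ≤ 1)
    (hint : IntegrableOn f (ball x r) μ)
    (hμr : μ (ball x r) < ⊤)
    (hμs : 0 < μ (ball x s)) :
    ‖(μ (ball x r)).toReal⁻¹ • (∫ y in ball x r, f y ∂μ) -
        (μ (ball x s)).toReal⁻¹ • (∫ y in ball x s, f y ∂μ)‖ ≤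
      2 * Real.sqrt
        (((μ (ball x r)).toReal - ‖∫ y in ball x r, f y ∂μ‖) /
          (μ (ball x s)).toReal) :=
  stmt14_general n μ f x s r hsr hf hint hμr hμs
end

section
/- Let φ be a norm on ℝ^n, C² away from 0, with φ² strongly convex. Then for every M > 0 the function p ↦ φ(p, -1) on ℝ^{n-1} is uniformly convex on {|p| ≤ M}: there exists λ(M) > 0 such that D²(p ↦ φ(p,-1)) ≥ λ(M)·Id on {|p| ≤ M}. -/
/-!
Put `x = (p, -1)` and `H = D²φ(x)`. Since `φ` is positively homogeneous of degree one,
`Dφ(x) x = φ(x)` and `H x = 0`, while `D²(φ²)(x) = 2 Dφ(x) ⊗ Dφ(x) + 2 φ(x) H`. Testing the strong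
convexity of `φ²` on `w - t x`, with `t` chosen so that `Dφ(x) (w - t x) = 0`, therefore gives
`α ‖w - t x‖² ≤ 2 φ(x) ⟪H w, w⟫`. For a horizontal `w = (v, 0)` the last coordinate of `w - t x`
is `t`, so `‖v‖ ≤ (1 + ‖x‖) ‖w - t x‖`. The Hessian of `p ↦ φ(p, -1)` is the horizontal block of
`H`, hence it is bounded below by `α / (2 (M + 2)² C)` on `‖p‖ ≤ M`, where `C` bounds `φ` on the
compact set of the corresponding points `x`.
-/

open scoped RealInnerProductSpace
open Topology

section Gradient

variable {F : Type*} [NormedAddCommGroup F] [InnerProductSpace ℝ F] [CompleteSpace F]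

theorem inner_fderiv_gradient_apply (f : F → ℝ) (x v w : F) :
    ⟪fderiv ℝ (gradient f) x v, w⟫ = fderiv ℝ (fderiv ℝ f) x v w := by
  have h : gradient f = ⇑(InnerProductSpace.toDual ℝ F).symm ∘ fderiv ℝ f := rfl
  rw [h, LinearIsometryEquiv.comp_fderiv]
  exact InnerProductSpace.toDual_symm_apply

theorem inner_fderiv_gradient_comp_add_const {E : Type*} [NormedAddCommGroup E]
    [InnerProductSpace ℝ E] [CompleteSpace E] (A : E →L[ℝ] F) (b : F) {f : F → ℝ} {p : E}
    (hf : ∀ q, DifferentiableAt ℝ f (A q + b)) (hg : DifferentiableAt ℝ (gradient f) (A p + b))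
    (v w : E) :
    ⟪fderiv ℝ (gradient fun q => f (A q + b)) p v, w⟫ =
      ⟪fderiv ℝ (gradient f) (A p + b) (A v), A w⟫ := by
  have haff (q : E) : HasFDerivAt (fun q => A q + b) A q := A.hasFDerivAt.add_const b
  have hgrad : gradient (fun q => f (A q + b)) = A.adjoint ∘ fun q => gradient f (A q + b) := by
    funext q
    refine ext_inner_right ℝ fun u => ?_
    have hd : HasFDerivAt (fun q => f (A q + b)) ((fderiv ℝ f (A q + b)).comp A) q :=
      (hf q).hasFDerivAt.comp q (haff q)
    rw [Function.comp_apply, ContinuousLinearMap.adjoint_inner_left, inner_gradient_left,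
      inner_gradient_left, hd.fderiv]
    rfl
  have hd : HasFDerivAt (fun q => gradient f (A q + b))
      ((fderiv ℝ (gradient f) (A p + b)).comp A) p :=
    HasFDerivAt.comp (g := gradient f) p hg.hasFDerivAt (haff p)
  rw [hgrad, (A.adjoint.hasFDerivAt.comp p hd).fderiv]
  simp [ContinuousLinearMap.adjoint_inner_left]

variable {f : F → ℝ} {x : F}

theorem ContDiffAt.differentiableAt_gradient (hf : ContDiffAt ℝ 2 f x) :
    DifferentiableAt ℝ (gradient f) x :=
  (InnerProductSpace.toDual ℝ F).symm.differentiableAt.comp x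
    ((hf.fderiv_right le_rfl).differentiableAt one_ne_zero)

theorem ContDiffAt.inner_fderiv_gradient_comm (hf : ContDiffAt ℝ 2 f x) (v w : F) :
    ⟪fderiv ℝ (gradient f) x v, w⟫ = ⟪fderiv ℝ (gradient f) x w, v⟫ := by
  simp only [inner_fderiv_gradient_apply]
  exact hf.isSymmSndFDerivAt (by simp) v w

theorem ContDiffAt.inner_fderiv_gradient_sq (hf : ContDiffAt ℝ 2 f x) (v w : F) :
    ⟪fderiv ℝ (gradient fun y => f y ^ 2) x v, w⟫ =
      2 * fderiv ℝ f x v * fderiv ℝ f x w + 2 * f x * ⟪fderiv ℝ (gradient f) x v, w⟫ := by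
  have hgrad : gradient (fun y => f y ^ 2) =ᶠ[𝓝 x] fun y => (2 * f y) • gradient f y := by
    filter_upwards [hf.eventually (by simp)] with y hy
    have hd := (hy.differentiableAt two_ne_zero).hasFDerivAt.pow 2
    simp only [gradient, hd.fderiv, map_smul]
    norm_num
  have hd : HasFDerivAt (fun y => (2 * f y) • gradient f y)
      ((2 * f x) • fderiv ℝ (gradient f) x +
        ((2 : ℝ) • fderiv ℝ f x).smulRight (gradient f x)) x :=
    ((hf.differentiableAt two_ne_zero).hasFDerivAt.const_mul 2).fun_smul
      hf.differentiableAt_gradient.hasFDerivAt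
  rw [hgrad.fderiv_eq, hd.fderiv]
  simp [inner_add_left, real_inner_smul_left, inner_gradient_left]
  ring

end Gradient

section Homogeneous

variable {F : Type*} [NormedAddCommGroup F] [NormedSpace ℝ F]

theorem fderiv_apply_self_of_eventually_eq {G : Type*} [NormedAddCommGroup G] [NormedSpace ℝ G]
    {g : F → G} {x : F} (hg : DifferentiableAt ℝ g x) {h : ℝ → G} {h' : G}
    (hh : HasDerivAt h h' 1) (heq : ∀ᶠ t in 𝓝 1, g (t • x) = h t) :
    fderiv ℝ g x x = h' := by
  have hline : HasDerivAt (fun t : ℝ => g (t • x)) (fderiv ℝ g x x) 1 :=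
    hg.hasFDerivAt.comp_hasDerivAt_of_eq (1 : ℝ)
      (by simpa using (hasDerivAt_id (1 : ℝ)).smul_const x) (one_smul ℝ x).symm
  exact (hline.congr_of_eventuallyEq (heq.mono fun t ht => ht.symm)).unique hh

variable {φ : F → ℝ} (hhom : ∀ c : ℝ, 0 < c → ∀ x, φ (c • x) = c * φ x)
include hhom

theorem fderiv_smul_of_pos {c : ℝ} (hc : 0 < c) (x : F) : fderiv ℝ φ (c • x) = fderiv ℝ φ x := by
  have h := fderiv_comp_smul (𝕜 := ℝ) (f := φ) (x := x) c
  rw [show (fun y => φ (c • y)) = c • φ from funext (hhom c hc), fderiv_const_smul_field,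
    Pi.smul_apply] at h
  exact (smul_right_injective _ hc.ne' h).symm

theorem fderiv_apply_self_of_homogeneous {x : F} (hφ : DifferentiableAt ℝ φ x) :
    fderiv ℝ φ x x = φ x :=
  fderiv_apply_self_of_eventually_eq hφ
    ((hasDerivAt_id 1).mul_const (φ x) |>.congr_deriv (one_mul _))
    (by filter_upwards [Ioi_mem_nhds one_pos] with t ht using hhom t ht x)

end Homogeneous

theorem norm_le_one_add_norm_mul_norm_sub_smul {F : Type*} [NormedAddCommGroup F]
    [InnerProductSpace ℝ F] {b w x : F} (hb : ‖b‖ = 1) (hw : ⟪w, b⟫ = 0) (hx : ⟪x, b⟫ = 1)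
    (t : ℝ) : ‖w‖ ≤ (1 + ‖x‖) * ‖w - t • x‖ := by
  set u := w - t • x
  have ht : |t| ≤ ‖u‖ := by
    have hub : ⟪u, b⟫ = -t := by
      rw [inner_sub_left, real_inner_smul_left, hw, hx]
      ring
    simpa [hub, hb] using abs_real_inner_le_norm u b
  calc ‖w‖ = ‖u + t • x‖ := by rw [sub_add_cancel]
    _ ≤ ‖u‖ + |t| * ‖x‖ := by rw [← Real.norm_eq_abs, ← norm_smul]; exact norm_add_le _ _
    _ ≤ ‖u‖ + ‖u‖ * ‖x‖ := by gcongr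
    _ = (1 + ‖x‖) * ‖u‖ := by ring

section HomogeneousInner

variable {F : Type*} [NormedAddCommGroup F] [InnerProductSpace ℝ F] [CompleteSpace F]
  {φ : F → ℝ} (hhom : ∀ c : ℝ, 0 < c → ∀ x, φ (c • x) = c * φ x)
include hhom

theorem fderiv_gradient_apply_self_of_homogeneous {x : F}
    (hφ : DifferentiableAt ℝ (gradient φ) x) : fderiv ℝ (gradient φ) x x = 0 :=
  fderiv_apply_self_of_eventually_eq hφ (hasDerivAt_const 1 (gradient φ x))
    (by filter_upwards [Ioi_mem_nhds one_pos] with t ht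
        simp only [gradient, fderiv_smul_of_pos hhom ht])

variable {x : F} (hφ : ContDiffAt ℝ 2 φ x) (hφx : φ x ≠ 0) {α : ℝ}
  (hconv : ∀ v, α * ‖v‖ ^ 2 ≤ ⟪fderiv ℝ (gradient fun y => φ y ^ 2) x v, v⟫)
include hφ hφx hconv

theorem exists_mul_norm_sub_smul_sq_le (w : F) :
    ∃ t : ℝ, α * ‖w - t • x‖ ^ 2 ≤ 2 * φ x * ⟪fderiv ℝ (gradient φ) x w, w⟫ := by
  set H := fderiv ℝ (gradient φ) x
  have hHx : H x = 0 := fderiv_gradient_apply_self_of_homogeneous hhom hφ.differentiableAt_gradient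
  refine ⟨fderiv ℝ φ x w / φ x, ?_⟩
  set w' := w - (fderiv ℝ φ x w / φ x) • x
  have hφw' : fderiv ℝ φ x w' = 0 := by
    rw [map_sub, map_smul, fderiv_apply_self_of_homogeneous hhom (hφ.differentiableAt two_ne_zero),
      smul_eq_mul, div_mul_cancel₀ _ hφx, sub_self]
  have hHw' : ⟪H w', w'⟫ = ⟪H w, w⟫ := by
    have hHwx : ⟪H w, x⟫ = 0 := by rw [hφ.inner_fderiv_gradient_comm, hHx, inner_zero_left]
    rw [map_sub, map_smul, hHx, smul_zero, sub_zero, inner_sub_right, real_inner_smul_right,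
      hHwx, mul_zero, sub_zero]
  have h := hconv w'
  rwa [hφ.inner_fderiv_gradient_sq, hφw', hHw', mul_zero, zero_add] at h

theorem mul_norm_sq_le_of_inner_eq_one (hα : 0 ≤ α) {b w : F} (hb : ‖b‖ = 1) (hw : ⟪w, b⟫ = 0)
    (hx : ⟪x, b⟫ = 1) :
    α * ‖w‖ ^ 2 ≤ 2 * (1 + ‖x‖) ^ 2 * φ x * ⟪fderiv ℝ (gradient φ) x w, w⟫ := by
  obtain ⟨t, ht⟩ := exists_mul_norm_sub_smul_sq_le hhom hφ hφx hconv w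
  calc α * ‖w‖ ^ 2 ≤ α * ((1 + ‖x‖) * ‖w - t • x‖) ^ 2 := by
        gcongr
        exact norm_le_one_add_norm_mul_norm_sub_smul hb hw hx t
    _ = (1 + ‖x‖) ^ 2 * (α * ‖w - t • x‖ ^ 2) := by ring
    _ ≤ (1 + ‖x‖) ^ 2 * (2 * φ x * ⟪fderiv ℝ (gradient φ) x w, w⟫) := by gcongr
    _ = _ := by ring

end HomogeneousInner

section Slice

variable {E F : Type*} [NormedAddCommGroup E] [InnerProductSpace ℝ E] [CompleteSpace E]
  [NormedAddCommGroup F] [InnerProductSpace ℝ F] [CompleteSpace F]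
  {φ : F → ℝ} (hhom : ∀ c : ℝ, 0 < c → ∀ x, φ (c • x) = c * φ x)
  {A : E →L[ℝ] F} (hA : ∀ v, ‖A v‖ = ‖v‖) {b : F} (hb : ‖b‖ = 1) (hAb : ∀ v, ⟪A v, b⟫ = 0)
  (hφ : ∀ q, ContDiffAt ℝ 2 φ (A q + b))
include hhom hA hb hAb hφ

theorem mul_norm_sq_le_inner_fderiv_gradient_comp_add_const {p : E} (hφp : φ (A p + b) ≠ 0)
    {α : ℝ} (hα : 0 ≤ α)
    (hconv : ∀ w, α * ‖w‖ ^ 2 ≤ ⟪fderiv ℝ (gradient fun y => φ y ^ 2) (A p + b) w, w⟫) (v : E) :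
    α * ‖v‖ ^ 2 ≤ 2 * (1 + ‖A p + b‖) ^ 2 * φ (A p + b) *
      ⟪fderiv ℝ (gradient fun q => φ (A q + b)) p v, v⟫ := by
  have hx : ⟪A p + b, b⟫ = 1 := by
    rw [inner_add_left, hAb, real_inner_self_eq_norm_sq, hb]
    norm_num
  rw [inner_fderiv_gradient_comp_add_const A b (fun q => (hφ q).differentiableAt two_ne_zero)
    (hφ p).differentiableAt_gradient, ← hA v]
  exact mul_norm_sq_le_of_inner_eq_one hhom (hφ p) hφp hconv hα hb (hAb v) hx

theorem exists_pos_mul_norm_sq_le_inner_fderiv_gradient_comp_add_const [ProperSpace E]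
    (hφpos : ∀ q, 0 < φ (A q + b)) {α : ℝ} (hα : 0 < α)
    (hconv : ∀ q w, α * ‖w‖ ^ 2 ≤ ⟪fderiv ℝ (gradient fun y => φ y ^ 2) (A q + b) w, w⟫)
    {M : ℝ} (hM : 0 ≤ M) :
    ∃ lam > 0, ∀ p : E, ‖p‖ ≤ M → ∀ v,
      lam * ‖v‖ ^ 2 ≤ ⟪fderiv ℝ (gradient fun q => φ (A q + b)) p v, v⟫ := by
  obtain ⟨C, hC⟩ := (isCompact_closedBall (0 : E) M).exists_bound_of_continuousOn
    (f := fun q => φ (A q + b)) fun q _ =>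
      (ContinuousAt.comp (f := fun q => A q + b) (hφ q).continuousAt (by fun_prop)).continuousWithinAt
  have hφC {q : E} (hq : ‖q‖ ≤ M) : φ (A q + b) ≤ C :=
    (le_abs_self _).trans (hC q (mem_closedBall_zero_iff.2 hq))
  have hCpos : 0 < C := (hφpos 0).trans_le (hφC (by simpa using hM))
  refine ⟨α / (2 * C * (M + 2) ^ 2), by positivity, fun p hp v => ?_⟩
  have key := mul_norm_sq_le_inner_fderiv_gradient_comp_add_const hhom hA hb hAb hφ
    (hφpos p).ne' hα.le (hconv p) v
  have hxM : ‖A p + b‖ ≤ M + 1 := by linarith [norm_add_le (A p) b, hA p]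
  have hQ := nonneg_of_mul_nonneg_right (le_trans (by positivity) key)
    (by have := hφpos p; positivity)
  rw [div_mul_eq_mul_div, div_le_iff₀ (by positivity)]
  calc α * ‖v‖ ^ 2 ≤ _ := key
    _ ≤ 2 * (M + 2) ^ 2 * C * ⟪fderiv ℝ (gradient fun q => φ (A q + b)) p v, v⟫ := by
        gcongr 2 * ?_ ^ 2 * ?_ * _
        · exact (hφpos p).le
        · linarith
        · exact hφC hp
    _ = _ := by ring

end Slice

noncomputable def snocZero (n : ℕ) :
    EuclideanSpace ℝ (Fin n) →ₗᵢ[ℝ] EuclideanSpace ℝ (Fin (n + 1)) where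
  toFun q :=
    (EuclideanSpace.equiv (Fin (n + 1)) ℝ).symm (Fin.snoc (EuclideanSpace.equiv (Fin n) ℝ q) 0)
  map_add' q r := by
    ext i
    induction i using Fin.lastCases <;> simp
  map_smul' c q := by
    ext i
    induction i using Fin.lastCases <;> simp
  norm_map' q := by simp [EuclideanSpace.norm_eq, Fin.sum_univ_castSucc]

@[simp]
theorem snocZero_apply_castSucc {n : ℕ} (q : EuclideanSpace ℝ (Fin n)) (i : Fin n) :
    snocZero n q i.castSucc = q i := by
  simp [snocZero]

@[simp]
theorem snocZero_apply_last {n : ℕ} (q : EuclideanSpace ℝ (Fin n)) :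
    snocZero n q (Fin.last n) = 0 := by
  simp [snocZero]

theorem snoc_eq_snocZero_add_single {n : ℕ} (q : EuclideanSpace ℝ (Fin n)) (a : ℝ) :
    (EuclideanSpace.equiv (Fin (n + 1)) ℝ).symm (Fin.snoc (EuclideanSpace.equiv (Fin n) ℝ q) a) =
      snocZero n q + EuclideanSpace.single (Fin.last n) a := by
  ext i
  induction i using Fin.lastCases <;> simp

theorem inner_snocZero_single_last {n : ℕ} (q : EuclideanSpace ℝ (Fin n)) (a : ℝ) :
    ⟪snocZero n q, EuclideanSpace.single (Fin.last n) a⟫ = 0 := by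
  simp [EuclideanSpace.inner_single_right]

theorem snocZero_add_single_last_ne_zero {n : ℕ} (q : EuclideanSpace ℝ (Fin n)) {a : ℝ}
    (ha : a ≠ 0) : snocZero n q + EuclideanSpace.single (Fin.last n) a ≠ 0 := by
  intro h
  simpa [ha] using congrArg (· (Fin.last n)) h

theorem stmt17_general (n : ℕ) (φ : EuclideanSpace ℝ (Fin (n + 1)) → ℝ)
    (hφ0 : ∀ x, 0 ≤ φ x) (hφeq : ∀ x, φ x = 0 ↔ x = 0)
    (hhom : ∀ (c : ℝ) (x), φ (c • x) = |c| * φ x)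
    (hsm : ContDiffOn ℝ 2 φ {x : EuclideanSpace ℝ (Fin (n + 1)) | x ≠ 0})
    (α : ℝ) (hα : 0 < α)
    (hconv : ∀ x : EuclideanSpace ℝ (Fin (n + 1)), x ≠ 0 → ∀ v,
      α * ‖v‖ ^ 2 ≤ ⟪fderiv ℝ (gradient fun y => φ y ^ 2) x v, v⟫) :
    ∀ M : ℝ, 0 < M → ∃ lam : ℝ, 0 < lam ∧
      ∀ p : EuclideanSpace ℝ (Fin n), ‖p‖ ≤ M → ∀ v,
        lam * ‖v‖ ^ 2 ≤
          ⟪fderiv ℝ (gradient fun q : EuclideanSpace ℝ (Fin n) =>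
              φ ((EuclideanSpace.equiv (Fin (n + 1)) ℝ).symm
                (Fin.snoc (EuclideanSpace.equiv (Fin n) ℝ q) (-1 : ℝ)))) p v,
            v⟫ := by
  intro M hM
  have hne (q : EuclideanSpace ℝ (Fin n)) :
      snocZero n q + EuclideanSpace.single (Fin.last n) (-1) ≠ 0 :=
    snocZero_add_single_last_ne_zero q (by norm_num)
  obtain ⟨lam, hlam, h⟩ := exists_pos_mul_norm_sq_le_inner_fderiv_gradient_comp_add_const
    (A := (snocZero n).toContinuousLinearMap) (fun c hc x => by rw [hhom, abs_of_pos hc])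
    (snocZero n).norm_map (by simp) (fun v => inner_snocZero_single_last v _)
    (fun q => hsm.contDiffAt (isOpen_compl_singleton.mem_nhds (hne q)))
    (fun q => (hφ0 _).lt_of_ne' (mt (hφeq _).1 (hne q))) hα (fun q => hconv _ (hne q)) hM.le
  refine ⟨lam, hlam, fun p hp v => ?_⟩
  simp_rw [snoc_eq_snocZero_add_single]
  exact h p hp v

theorem stmt17 (n : ℕ) (φ : EuclideanSpace ℝ (Fin (n + 1)) → ℝ)
    (hφ0 : ∀ x, 0 ≤ φ x) (hφeq : ∀ x, φ x = 0 ↔ x = 0)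
    (hhom : ∀ (c : ℝ) (x), φ (c • x) = |c| * φ x)
    (htri : ∀ x y, φ (x + y) ≤ φ x + φ y)
    (hsm : ContDiffOn ℝ 2 φ {x : EuclideanSpace ℝ (Fin (n + 1)) | x ≠ 0})
    (α : ℝ) (hα : 0 < α)
    (hconv : ∀ x : EuclideanSpace ℝ (Fin (n + 1)), x ≠ 0 → ∀ v,
      α * ‖v‖ ^ 2 ≤ ⟪fderiv ℝ (gradient fun y => φ y ^ 2) x v, v⟫) :
    ∀ M : ℝ, 0 < M → ∃ lam : ℝ, 0 < lam ∧
      ∀ p : EuclideanSpace ℝ (Fin n), ‖p‖ ≤ M → ∀ v,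
        lam * ‖v‖ ^ 2 ≤
          ⟪fderiv ℝ (gradient fun q : EuclideanSpace ℝ (Fin n) =>
              φ ((EuclideanSpace.equiv (Fin (n + 1)) ℝ).symm
                (Fin.snoc (EuclideanSpace.equiv (Fin n) ℝ q) (-1 : ℝ)))) p v,
            v⟫ :=
  stmt17_general n φ hφ0 hφeq hhom hsm α hα hconv
end
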